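/- Let B = [b_{i₁,…,i_d}] ∈ ℝ₊^{m₁×⋯×m_d} (d ≥ 2, each m_j ≥ 2) be a nonnegative tensor with no zero slice, and let s_k ∈ ℝ^{m_k}, k ∈ [d], be positive vectors satisfying the compatibility condition. Let P₀ : U(s₁,…,s_d) → V₀(s₁,…,s_d)^⊥ be the orthogonal projection, and for j ∈ [d] let W_j = {P₀(0,x_j) : x_j ∈ L(s_j)}, where (0,x_j) denotes the element of U(s₁,…,s_d) with j-th block x_j and all other blocks zero. Then dim W_j = m_j − 1 for every j ∈ [d]. -/

import Mathlib

section

variable {d : ℕ} {m : Fin d → ℕ}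

/-- The subspace `U(s₁,…,s_d) = {x : sₖᵀxₖ = 0 for all k}` of
`ℝ^{m₁} × ⋯ × ℝ^{m_d}`, realized inside `EuclideanSpace ℝ ((k : Fin d) × Fin (m k))`. -/
noncomputable def Usub (s : (k : Fin d) → Fin (m k) → ℝ) :
    Submodule ℝ (EuclideanSpace ℝ ((k : Fin d) × Fin (m k))) where
  carrier := {x | ∀ k : Fin d, ∑ i : Fin (m k), s k i * x ⟨k, i⟩ = 0}
  add_mem' := by
    intro a b ha hb k
    simp only [PiLp.add_apply, mul_add, Finset.sum_add_distrib, ha k, hb k, add_zero]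
  zero_mem' := by intro k; simp
  smul_mem' := by
    intro c a ha k
    have : ∀ i : Fin (m k), s k i * (c • a) ⟨k, i⟩ = c * (s k i * a ⟨k, i⟩) := by
      intro i; simp [PiLp.smul_apply, smul_eq_mul]; ring
    simp only [this, ← Finset.mul_sum, ha k, mul_zero]

/-- The subspace `V(s₁,…,s_d) = {x : x₁(i₁) + ⋯ + x_d(i_d) = 0 whenever B i > 0}`. -/
noncomputable def Vsub (B : ((j : Fin d) → Fin (m j)) → ℝ) :
    Submodule ℝ (EuclideanSpace ℝ ((k : Fin d) × Fin (m k))) where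
  carrier := {x | ∀ i : (j : Fin d) → Fin (m j), 0 < B i → ∑ k : Fin d, x ⟨k, i k⟩ = 0}
  add_mem' := by
    intro a b ha hb i hi
    simp only [PiLp.add_apply, Finset.sum_add_distrib, ha i hi, hb i hi, add_zero]
  zero_mem' := by intro i _; simp
  smul_mem' := by
    intro c a ha i hi
    have : ∀ k : Fin d, (c • a) ⟨k, i k⟩ = c * a ⟨k, i k⟩ := by
      intro k; simp [PiLp.smul_apply, smul_eq_mul]
    simp only [this, ← Finset.mul_sum, ha i hi, mul_zero]

/-- The orthogonal complement `V₀(s₁,…,s_d)^⊥` of `V₀ = V ∩ U` inside `U`. -/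
noncomputable def V0perp (B : ((j : Fin d) → Fin (m j)) → ℝ)
    (s : (k : Fin d) → Fin (m k) → ℝ) :
    Submodule ℝ (EuclideanSpace ℝ ((k : Fin d) × Fin (m k))) :=
  Usub s ⊓ (Vsub B ⊓ Usub s)ᗮ

/-- The copy of `L(s_j)` inside `U(s₁,…,s_d)`: vectors supported on the `j`-th block
whose `j`-th block lies in `L(s_j) = {x_j : s_jᵀx_j = 0}`. -/
noncomputable def Lblock (s : (k : Fin d) → Fin (m k) → ℝ) (j : Fin d) :
    Submodule ℝ (EuclideanSpace ℝ ((k : Fin d) × Fin (m k))) where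
  carrier := {x | (∑ i : Fin (m j), s j i * x ⟨j, i⟩ = 0) ∧
    ∀ p : (k : Fin d) × Fin (m k), p.1 ≠ j → x p = 0}
  add_mem' := by
    intro a b ha hb
    refine ⟨?_, ?_⟩
    · simp only [PiLp.add_apply, mul_add, Finset.sum_add_distrib, ha.1, hb.1, add_zero]
    · intro p hp; simp [PiLp.add_apply, ha.2 p hp, hb.2 p hp]
  zero_mem' := ⟨by simp, by intro p _; simp⟩
  smul_mem' := by
    intro c a ha
    refine ⟨?_, ?_⟩
    · have : ∀ i : Fin (m j), s j i * (c • a) ⟨j, i⟩ = c * (s j i * a ⟨j, i⟩) := by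
        intro i; simp [PiLp.smul_apply, smul_eq_mul]; ring
      simp only [this, ← Finset.mul_sum, ha.1, mul_zero]
    · intro p hp; simp [PiLp.smul_apply, ha.2 p hp]

/-- The orthogonal projection of the ambient space onto `V₀(s₁,…,s_d)^⊥`, as a linear
map into the ambient space. -/
noncomputable def P0 (B : ((j : Fin d) → Fin (m j)) → ℝ)
    (s : (k : Fin d) → Fin (m k) → ℝ) :
    EuclideanSpace ℝ ((k : Fin d) × Fin (m k)) →ₗ[ℝ]
      EuclideanSpace ℝ ((k : Fin d) × Fin (m k)) :=
  (V0perp B s).subtype ∘ₗ (Submodule.orthogonalProjection (V0perp B s)).toLinearMap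

/-- The subspace `W_j = P₀({(0, x_j) : x_j ∈ L(s_j)}) ⊆ V₀(s₁,…,s_d)^⊥`. -/
noncomputable def Wsub (B : ((j : Fin d) → Fin (m j)) → ℝ)
    (s : (k : Fin d) → Fin (m k) → ℝ) (j : Fin d) :
    Submodule ℝ (EuclideanSpace ℝ ((k : Fin d) × Fin (m k))) :=
  Submodule.map (P0 B s) (Lblock s j)

/-!
`P₀` is injective on the copy of `L(s_j)` in `U`. Its kernel is `(V₀^⊥)^⊥`, which meets `U`
exactly in `V₀ ⊆ V`; and a vector supported on the `j`-th block lies in `V` only if it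
vanishes, because every index `i_j` occurs in some positive entry of `B` (no zero slice), where
the defining equation of `V` reduces to `x_{j,i_j} = 0`. Hence
`dim W_j = dim L(s_j) = m_j − 1`, as `s_j ≠ 0`.
-/

theorem Submodule.finrank_map_of_disjoint_ker {K V V' : Type*} [DivisionRing K]
    [AddCommGroup V] [Module K V] [AddCommGroup V'] [Module K V'] {f : V →ₗ[K] V'}
    {p : Submodule K V} (h : Disjoint p (LinearMap.ker f)) :
    Module.finrank K (p.map f) = Module.finrank K p := by
  rw [← LinearMap.range_domRestrict]
  exact LinearMap.finrank_range_of_inj (LinearMap.injective_domRestrict_iff.mpr h)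

theorem finrank_ker_dotProductEquiv {K n : Type*} [Field K] [Fintype n] [DecidableEq n]
    {v : n → K} (hv : v ≠ 0) :
    Module.finrank K (LinearMap.ker (dotProductEquiv K n v)) = Fintype.card n - 1 := by
  have hf : dotProductEquiv K n v ≠ 0 := by simpa using hv
  have := Module.Dual.finrank_ker_add_one_of_ne_zero hf
  rw [Module.finrank_fintype_fun_eq_card] at this
  omega

theorem Submodule.inf_orthogonal_inf_orthogonal {𝕜 E : Type*} [RCLike 𝕜]
    [NormedAddCommGroup E] [InnerProductSpace 𝕜 E] {A U : Submodule 𝕜 E}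
    [A.HasOrthogonalProjection] (h : A ≤ U) : U ⊓ (U ⊓ Aᗮ)ᗮ = A := by
  refine le_antisymm (fun x hx => ?_) fun a ha =>
    ⟨h ha, fun w hw => inner_left_of_mem_orthogonal ha hw.2⟩
  obtain ⟨hxU, hx⟩ := mem_inf.mp hx
  rw [← sup_orthogonal_inf_of_hasOrthogonalProjection h, mem_sup] at hxU
  obtain ⟨a, ha, w, hw, rfl⟩ := hxU
  have hw' : w ∈ U ⊓ Aᗮ := inf_comm (Aᗮ) U ▸ hw
  have hww : inner 𝕜 w w = 0 := by
    simpa only [inner_add_right, inner_left_of_mem_orthogonal ha hw'.2, zero_add] using hx w hw'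
  rwa [inner_self_eq_zero.mp hww, add_zero]

noncomputable def blockIncl (j : Fin d) :
    (Fin (m j) → ℝ) →ₗ[ℝ] EuclideanSpace ℝ ((k : Fin d) × Fin (m k)) :=
  (WithLp.linearEquiv 2 ℝ _).symm.toLinearMap ∘ₗ
    (LinearEquiv.piCurry ℝ fun _ _ => ℝ).symm.toLinearMap ∘ₗ
      LinearMap.single ℝ (fun k => Fin (m k) → ℝ) j

theorem blockIncl_apply (j : Fin d) (y : Fin (m j) → ℝ) (p : (k : Fin d) × Fin (m k)) :
    blockIncl j y p = Pi.single (M := fun k => Fin (m k) → ℝ) j y p.1 p.2 :=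
  rfl

theorem blockIncl_injective (j : Fin d) : Function.Injective (blockIncl (m := m) j) := by
  intro y z h
  funext i
  simpa [blockIncl_apply] using congrArg (· ⟨j, i⟩) h

theorem Lblock_eq_map_blockIncl (s : (k : Fin d) → Fin (m k) → ℝ) (j : Fin d) :
    Lblock s j = (LinearMap.ker (dotProductEquiv ℝ _ (s j))).map (blockIncl j) := by
  ext x
  constructor
  · rintro ⟨hsum, hsupp⟩
    refine ⟨fun i => x ⟨j, i⟩, hsum, ?_⟩
    ext ⟨k, i⟩
    by_cases hk : k = j
    · subst hk
      simp [blockIncl_apply]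
    · simp [blockIncl_apply, hk, hsupp ⟨k, i⟩ hk]
  · rintro ⟨y, hy, rfl⟩
    exact ⟨by simpa [blockIncl_apply, dotProduct] using hy,
      fun p hp => by simp [blockIncl_apply, hp]⟩

theorem finrank_Lblock {s : (k : Fin d) → Fin (m k) → ℝ} {j : Fin d} (hs : s j ≠ 0) :
    Module.finrank ℝ (Lblock s j) = m j - 1 := by
  rw [Lblock_eq_map_blockIncl, Submodule.finrank_map_of_disjoint_ker,
    finrank_ker_dotProductEquiv hs, Fintype.card_fin]
  simp only [LinearMap.ker_eq_bot.mpr (blockIncl_injective j), disjoint_bot_right]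

theorem Lblock_le_Usub (s : (k : Fin d) → Fin (m k) → ℝ) (j : Fin d) :
    Lblock s j ≤ Usub s := by
  rintro x ⟨hsum, hsupp⟩ k
  by_cases hk : k = j
  · subst hk
    exact hsum
  · simp [hsupp ⟨k, _⟩ hk]

theorem disjoint_Lblock_Vsub {B : ((j : Fin d) → Fin (m j)) → ℝ} {j : Fin d}
    (hslice : ∀ ij : Fin (m j), ∃ i : (k : Fin d) → Fin (m k), i j = ij ∧ 0 < B i)
    (s : (k : Fin d) → Fin (m k) → ℝ) : Disjoint (Lblock s j) (Vsub B) := by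
  refine Submodule.disjoint_def.mpr fun x ⟨_, hsupp⟩ hxV => ?_
  ext ⟨k, ik⟩
  by_cases hk : k = j
  · subst hk
    obtain ⟨i, rfl, hBi⟩ := hslice ik
    simpa [Finset.sum_eq_single k fun l _ hl => hsupp ⟨l, i l⟩ hl] using hxV i hBi
  · exact hsupp _ hk

theorem ker_P0 (B : ((j : Fin d) → Fin (m j)) → ℝ) (s : (k : Fin d) → Fin (m k) → ℝ) :
    LinearMap.ker (P0 B s) = (V0perp B s)ᗮ := by
  rw [P0, LinearMap.ker_comp_of_ker_eq_bot _ (Submodule.ker_subtype _)]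
  exact Submodule.ker_orthogonalProjectionOnto

theorem disjoint_Lblock_ker_P0 {B : ((j : Fin d) → Fin (m j)) → ℝ} {j : Fin d}
    (hslice : ∀ ij : Fin (m j), ∃ i : (k : Fin d) → Fin (m k), i j = ij ∧ 0 < B i)
    (s : (k : Fin d) → Fin (m k) → ℝ) : Disjoint (Lblock s j) (LinearMap.ker (P0 B s)) := by
  have hU : Usub s ⊓ LinearMap.ker (P0 B s) ≤ Vsub B := by
    rw [ker_P0, V0perp, Submodule.inf_orthogonal_inf_orthogonal inf_le_right]
    exact inf_le_left
  refine Submodule.disjoint_def.mpr fun x hxL hxK => ?_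
  exact Submodule.disjoint_def.mp (disjoint_Lblock_Vsub hslice s) x hxL
    (hU ⟨Lblock_le_Usub s j hxL, hxK⟩)

theorem dim_Wj_general {d : ℕ} {m : Fin d → ℕ}
    (hm : ∀ j, 2 ≤ m j)
    (B : ((j : Fin d) → Fin (m j)) → ℝ)
    (hB : ∀ i, 0 ≤ B i)
    (hslice : ∀ (k : Fin d) (ik : Fin (m k)),
      ∃ i : (j : Fin d) → Fin (m j), i k = ik ∧ B i ≠ 0)
    (s : (k : Fin d) → Fin (m k) → ℝ) (hs : ∀ k i, 0 < s k i) :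
    ∀ j : Fin d, Module.finrank ℝ (Wsub B s j) = m j - 1 := by
  intro j
  have hpos : ∀ ij : Fin (m j), ∃ i : (k : Fin d) → Fin (m k), i j = ij ∧ 0 < B i :=
    fun ij => (hslice j ij).imp fun i hi => ⟨hi.1, (hB i).lt_of_ne' hi.2⟩
  have hsj : s j ≠ 0 := Function.ne_iff.mpr ⟨⟨0, by linarith [hm j]⟩, (hs j _).ne'⟩
  rw [Wsub, Submodule.finrank_map_of_disjoint_ker (disjoint_Lblock_ker_P0 hpos s),
    finrank_Lblock hsj]

/-- Lemma 4.1 (1) of the paper. For every `j ∈ [d]`,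
`dim W_j = m_j − 1`. -/
theorem dim_Wj {d : ℕ} {m : Fin d → ℕ} (hd : 2 ≤ d)
    (hm : ∀ j, 2 ≤ m j)
    (B : ((j : Fin d) → Fin (m j)) → ℝ)
    (hB : ∀ i, 0 ≤ B i)
    (hslice : ∀ (k : Fin d) (ik : Fin (m k)),
      ∃ i : (j : Fin d) → Fin (m j), i k = ik ∧ B i ≠ 0)
    (s : (k : Fin d) → Fin (m k) → ℝ) (hs : ∀ k i, 0 < s k i)
    (hcompat : ∀ k l : Fin d, ∑ i, s k i = ∑ i, s l i) :
    ∀ j : Fin d, Module.finrank ℝ (Wsub B s j) = m j - 1 :=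
  dim_Wj_general hm B hB hslice s hs

end
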